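/- arXiv:2005.07490 — 6 statements merged into one kernel-verified Lean document; each statement's English description precedes it below -/
import Mathlib

section
/- Let v be a primitive word of length n over alphabet A, and suppose w = v^k · q for some k ≥ 2 and some word q with |q| < n, and suppose v·v is a suffix of w. Then q is the empty word, and hence w is a power of v. -/
/-- Concatenation power of a word. -/
def wpow {A : Type*} (v : List A) : ℕ → List A
  | 0 => []
  | n + 1 => v ++ wpow v n

/-- A word is primitive if it is a `k`-th power only for `k = 1`. -/
def Primitive {A : Type*} (v : List A) : Prop :=
  ∀ (w : List A) (k : ℕ), v = wpow w k → k = 1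

lemma wpow_add {A : Type*} (v : List A) (i j : ℕ) :
    wpow v (i + j) = wpow v i ++ wpow v j := by
  induction i with
  | zero => simp [wpow]
  | succ i ih => rw [Nat.succ_add]; simp [wpow, ih]

lemma wpow_length {A : Type*} (v : List A) (i : ℕ) :
    (wpow v i).length = i * v.length := by
  induction i with
  | zero => simp [wpow]
  | succ i ih => simp [wpow, ih, Nat.succ_mul, Nat.add_comm]

lemma comm_pow_aux {A : Type*} : ∀ (N : ℕ) (s x : List A),
    s.length + x.length ≤ N → s ++ x = x ++ s →
    ∃ (t : List A) (i j : ℕ), s = wpow t i ∧ x = wpow t j := by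
  intro N
  induction N with
  | zero =>
    intro s x hlen _
    have hs : s = [] := by
      cases s with
      | nil => rfl
      | cons a l => simp at hlen
    have hx : x = [] := by
      cases x with
      | nil => rfl
      | cons a l => simp at hlen
    exact ⟨[], 0, 0, by simp [hs, wpow], by simp [hx, wpow]⟩
  | succ N ih =>
    intro s x hlen h
    rcases le_total s.length x.length with hle | hle
    · rcases eq_or_ne s [] with rfl | hs
      · exact ⟨x, 0, 1, by simp [wpow], by simp [wpow]⟩
      · -- s is a prefix of x
        have hpre : s <+: x := by
          have h1 : s <+: x ++ s := ⟨x, h⟩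
          exact List.prefix_of_prefix_length_le h1 (List.prefix_append x s) hle
        obtain ⟨y, rfl⟩ := hpre
        have h' : s ++ y = y ++ s := by
          have h2 := h
          rw [List.append_assoc] at h2
          exact List.append_cancel_left h2
        have hslen : 1 ≤ s.length := by
          cases s with
          | nil => exact absurd rfl hs
          | cons a l => simp
        have : s.length + y.length ≤ N := by
          simp at hlen; omega
        obtain ⟨t, i, j, hsi, hyj⟩ := ih s y this h'
        exact ⟨t, i, i + j, hsi, by rw [wpow_add, ← hsi, ← hyj]⟩
    · rcases eq_or_ne x [] with rfl | hx
      · exact ⟨s, 1, 0, by simp [wpow], by simp [wpow]⟩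
      · have hpre : x <+: s := by
          have h1 : x <+: s ++ x := ⟨s, h.symm⟩
          exact List.prefix_of_prefix_length_le h1 (List.prefix_append s x) hle
        obtain ⟨y, rfl⟩ := hpre
        have h' : x ++ y = y ++ x := by
          have h2 := h.symm
          rw [List.append_assoc] at h2
          exact List.append_cancel_left h2
        have hxlen : 1 ≤ x.length := by
          cases x with
          | nil => exact absurd rfl hx
          | cons a l => simp
        have : x.length + y.length ≤ N := by
          simp at hlen; omega
        obtain ⟨t, i, j, hxi, hyj⟩ := ih x y this h'
        exact ⟨t, i + j, i, by rw [wpow_add, ← hxi, ← hyj], hxi⟩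

lemma comm_pow {A : Type*} (s x : List A) (h : s ++ x = x ++ s) :
    ∃ (t : List A) (i j : ℕ), s = wpow t i ∧ x = wpow t j :=
  comm_pow_aux (s.length + x.length) s x le_rfl h

lemma wpow_eq_nil {A : Type*} {t : List A} {i : ℕ} (h : wpow t i = []) (hi : i ≠ 0) :
    t = [] := by
  cases i with
  | zero => exact absurd rfl hi
  | succ i => simp [wpow] at h; exact h.1

/-- If `v` is primitive of length `n`, `w = v^k · q` with `k ≥ 2` and `|q| < n`,
and `v·v` is a suffix of `w`, then `q` is empty, hence `w` is a power of `v`. -/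
theorem stmt_1 {A : Type*} (v q w : List A) (n k : ℕ)
    (hprim : Primitive v) (hn : v.length = n)
    (hw : w = wpow v k ++ q) (hk : 2 ≤ k) (hq : q.length < n)
    (hsuf : (v ++ v) <:+ w) :
    q = [] ∧ ∃ m : ℕ, w = wpow v m := by
  obtain ⟨k', rfl⟩ : ∃ k', k = k' + 2 := ⟨k - 2, by omega⟩
  have hw2 : w = wpow v k' ++ (v ++ (v ++ q)) := by
    rw [hw, wpow_add]
    simp [wpow]
  obtain ⟨u, hu⟩ := hsuf
  -- u has length k'*n + |q|, so wpow v k' is a prefix of u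
  have hulen : u.length + (v.length + v.length) = w.length := by
    have := congrArg List.length hu
    simpa using this
  have hwlen : w.length = k' * n + 2 * n + q.length := by
    rw [hw, List.length_append, wpow_length, hn]
    ring
  have hklen : (wpow v k').length = k' * n := by rw [wpow_length, hn]
  have hu_pre : u <+: w := ⟨v ++ v, by rw [← List.append_assoc] at hu ⊢; simpa using hu⟩
  have hk_pre : wpow v k' <+: w := ⟨v ++ (v ++ q), hw2.symm⟩
  have hle : (wpow v k').length ≤ u.length := by
    rw [hklen]; rw [hn] at hulen; omega
  have hpre : wpow v k' <+: u := List.prefix_of_prefix_length_le hk_pre hu_pre hle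
  obtain ⟨s, rfl⟩ := hpre
  -- cancel wpow v k' : s ++ v ++ v = v ++ v ++ q
  have hmain : s ++ (v ++ v) = v ++ (v ++ q) := by
    have : wpow v k' ++ (s ++ (v ++ v)) = wpow v k' ++ (v ++ (v ++ q)) := by
      rw [← hw2, ← hu]; simp
    exact List.append_cancel_left this
  have hslen : s.length = q.length := by
    have := congrArg List.length hmain
    simp at this; omega
  -- s is a prefix of v
  have hsv : s <+: v := by
    have h1 : s <+: v ++ (v ++ q) := ⟨v ++ v, hmain⟩
    have h2 : v <+: v ++ (v ++ q) := List.prefix_append _ _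
    exact List.prefix_of_prefix_length_le h1 h2 (by omega)
  obtain ⟨x, hx⟩ := hsv
  -- derive s ++ x = x ++ s and s = q
  have key : (s ++ x) ++ (s ++ x) = (x ++ s) ++ (x ++ q) := by
    have : s ++ ((s ++ x) ++ (s ++ x)) = s ++ ((x ++ s) ++ (x ++ q)) := by
      calc s ++ ((s ++ x) ++ (s ++ x)) = s ++ (v ++ v) := by rw [hx]
        _ = v ++ (v ++ q) := hmain
        _ = (s ++ x) ++ ((s ++ x) ++ q) := by rw [hx]
        _ = s ++ ((x ++ s) ++ (x ++ q)) := by simp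
    exact List.append_cancel_left this
  have hlen_eq : (s ++ x).length = (x ++ s).length := by simp; omega
  obtain ⟨hcomm, hrest⟩ := List.append_inj key hlen_eq
  have hsq : s = q := by
    have : x ++ s = x ++ q := by rw [← hcomm, hrest]
    exact List.append_cancel_left this
  -- now prove q = []
  have hqnil : q = [] := by
    by_contra hqne
    have hsne : s ≠ [] := hsq ▸ hqne
    have hxne : x ≠ [] := by
      intro hxnil
      have := congrArg List.length hx
      rw [hxnil] at this
      simp [hn] at this
      omega
    obtain ⟨t, i, j, hsi, hxj⟩ := comm_pow s x hcomm
    have hv : v = wpow t (i + j) := by rw [wpow_add, ← hsi, ← hxj, hx]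
    have := hprim t (i + j) hv
    have hi : i ≠ 0 := fun h0 => hsne (by rw [hsi, h0]; rfl)
    have hj : j ≠ 0 := fun h0 => hxne (by rw [hxj, h0]; rfl)
    omega
  exact ⟨hqnil, k' + 2, by rw [hw, hqnil]; simp⟩
end

section
/- Let E : A* → B* be the symbol expansion monoid homomorphism associated to a letter α ∈ A, where B = A ∪ {⋄} with ⋄ ∉ A, defined by E(α) = α⋄ and E(a) = a for a ≠ α. Then the image E(A+) equals B+ minus the union of: words starting with ⋄, words ending with α, words containing a factor αx with x ∈ A, and words containing a factor x⋄ with x ∈ B \ {α}. -/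
/-- The symbol expansion homomorphism associated to a letter `α`:
here `B = Option A`, with `none` playing the role of the fresh letter `⋄`
and `some a` the role of a letter `a ∈ A`.  One has `E(α) = α⋄` and
`E(a) = a` for `a ≠ α`, extended multiplicatively (i.e. by concatenation). -/
def expand {A : Type*} [DecidableEq A] (α : A) (u : List A) : List (Option A) :=
  u.flatMap fun a => if a = α then [some a, none] else [some a]

lemma expand_nil {A : Type*} [DecidableEq A] (α : A) : expand α [] = [] := rfl

lemma expand_cons {A : Type*} [DecidableEq A] (α : A) (a : A) (u : List A) :
    expand α (a :: u) = (if a = α then [some a, none] else [some a]) ++ expand α u := by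
  simp [expand]

lemma expand_ne_nil {A : Type*} [DecidableEq A] (α : A) {u : List A} (hu : u ≠ []) :
    expand α u ≠ [] := by
  cases u with
  | nil => simp at hu
  | cons a u =>
    rw [expand_cons]
    split <;> simp

lemma head?_expand {A : Type*} [DecidableEq A] (α : A) (u : List A) (y : Option A)
    (h : (expand α u).head? = some y) : ∃ b, y = some b := by
  cases u with
  | nil => simp [expand_nil] at h
  | cons a u =>
    rw [expand_cons] at h
    split at h <;> simp at h <;> exact ⟨a, h.symm⟩

lemma getLast?_expand {A : Type*} [DecidableEq A] (α : A) :
    ∀ u : List A, (expand α u).getLast? ≠ some (some α) := by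
  intro u
  induction u with
  | nil => simp [expand_nil]
  | cons a u ih =>
    rw [expand_cons]
    rcases eq_or_ne u [] with rfl | hu
    · rw [expand_nil, List.append_nil]
      split_ifs with h
      · simp
      · simp [Option.some_inj, h]
    · rw [List.getLast?_append_of_ne_nil _ (expand_ne_nil α hu)]
      exact ih

lemma chain'_expand {A : Type*} [DecidableEq A] (α : A) :
    ∀ u : List A, (expand α u).Chain' (fun x y => (x = some α ↔ y = none)) := by
  intro u
  induction u with
  | nil => exact List.isChain_nil
  | cons a u ih =>
    rw [expand_cons]
    split_ifs with h
    · rw [List.cons_append, List.cons_append, List.nil_append,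
        List.Chain', List.isChain_cons, List.isChain_cons]
      refine ⟨?_, ?_, ih⟩
      · intro y hy
        simp only [List.head?_cons, Option.mem_def, Option.some_inj] at hy
        subst hy
        simp [h]
      · intro y hy
        obtain ⟨b, rfl⟩ := head?_expand α u y hy
        simp
    · rw [List.cons_append, List.nil_append, List.Chain', List.isChain_cons]
      refine ⟨?_, ih⟩
      intro y hy
      obtain ⟨b, rfl⟩ := head?_expand α u y hy
      simp [Option.some_inj, h]

lemma factor_rel {A : Type*} {R : Option A → Option A → Prop} {w s t : List (Option A)}
    {p q : Option A} (hc : w.Chain' R) (hw : w = s ++ [p, q] ++ t) : R p q := by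
  have : [p, q] <:+: w := ⟨s, t, hw.symm⟩
  have := hc.infix this
  exact List.isChain_pair.mp this

theorem expand_back {A : Type*} [DecidableEq A] (α : A) (w : List (Option A))
    (h0 : w ≠ [])
    (h1 : ∀ t, w ≠ none :: t)
    (h2 : ∀ s, w ≠ s ++ [some α])
    (h3 : ∀ s t x, w ≠ s ++ [some α, some x] ++ t)
    (h4 : ∀ s t (x : Option A), x ≠ some α → w ≠ s ++ [x, none] ++ t) :
    ∃ u : List A, u ≠ [] ∧ w = expand α u := by
  cases w with
  | nil => exact absurd rfl h0
  | cons x rest =>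
  cases x with
  | none => exact absurd rfl (h1 rest)
  | some a =>
    by_cases ha : a = α
    · subst ha
      cases rest with
      | nil => exact absurd rfl (h2 [])
      | cons y rest' =>
      cases y with
      | some x => exact absurd rfl (h3 [] rest' x)
      | none =>
        cases rest' with
        | nil =>
          refine ⟨[a], by simp, ?_⟩
          simp [expand]
        | cons z rest'' =>
          have h0' : (z :: rest'' : List (Option A)) ≠ [] := by simp
          have h1' : ∀ t, (z :: rest'' : List (Option A)) ≠ none :: t := by
            intro t ht
            exact (h4 [some a] t none (by simp) (by simp [ht]))
          have h2' : ∀ s, (z :: rest'' : List (Option A)) ≠ s ++ [some a] := by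
            intro s hs
            exact h2 (some a :: none :: s) (by simp [hs])
          have h3' : ∀ s t x, (z :: rest'' : List (Option A)) ≠ s ++ [some a, some x] ++ t := by
            intro s t x hs
            exact h3 (some a :: none :: s) t x (by simp [hs])
          have h4' : ∀ s t (x : Option A), x ≠ some a →
              (z :: rest'' : List (Option A)) ≠ s ++ [x, none] ++ t := by
            intro s t x hx hs
            exact h4 (some a :: none :: s) t x hx (by simp [hs])
          obtain ⟨u, hu, hw⟩ := expand_back a (z :: rest'') h0' h1' h2' h3' h4'
          refine ⟨a :: u, by simp, ?_⟩
          rw [expand_cons, if_pos rfl, hw]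
          simp
    · cases rest with
      | nil =>
        refine ⟨[a], by simp, ?_⟩
        simp [expand, ha]
      | cons y rest' =>
      cases y with
      | none =>
        exact absurd rfl (h4 [] rest' (some a) (by simp [Option.some_inj, ha]))
      | some b =>
        have h0' : (some b :: rest' : List (Option A)) ≠ [] := by simp
        have h1' : ∀ t, (some b :: rest' : List (Option A)) ≠ none :: t := by
          intro t ht; simp at ht
        have h2' : ∀ s, (some b :: rest' : List (Option A)) ≠ s ++ [some α] := by
          intro s hs
          exact h2 (some a :: s) (by simp [hs])
        have h3' : ∀ s t x, (some b :: rest' : List (Option A)) ≠ s ++ [some α, some x] ++ t := by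
          intro s t x hs
          exact h3 (some a :: s) t x (by simp [hs])
        have h4' : ∀ s t (x : Option A), x ≠ some α →
            (some b :: rest' : List (Option A)) ≠ s ++ [x, none] ++ t := by
          intro s t x hx hs
          exact h4 (some a :: s) t x hx (by simp [hs])
        obtain ⟨u, hu, hw⟩ := expand_back α (some b :: rest') h0' h1' h2' h3' h4'
        refine ⟨a :: u, by simp, ?_⟩
        rw [expand_cons, if_neg ha, hw]
        simp
termination_by w.length

/-- The image `E(A⁺)` of the set of nonempty words under the symbol expansion
is the set of nonempty words over `B` minus the union of: words starting with `⋄`,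
words ending with `α`, words containing a factor `αx` with `x ∈ A`, and words
containing a factor `x⋄` with `x ∈ B \ {α}`. -/
theorem stmt_5 {A : Type*} [DecidableEq A] (α : A) :
    {w : List (Option A) | ∃ u : List A, u ≠ [] ∧ w = expand α u} =
      {w : List (Option A) | w ≠ []} \
        ({w : List (Option A) | ∃ t, w = none :: t} ∪
         {w : List (Option A) | ∃ s, w = s ++ [some α]} ∪
         {w : List (Option A) | ∃ (s t : List (Option A)) (x : A), w = s ++ [some α, some x] ++ t} ∪
         {w : List (Option A) | ∃ (s t : List (Option A)) (x : Option A), x ≠ some α ∧ w = s ++ [x, none] ++ t}) := by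
  ext w
  simp only [Set.mem_setOf_eq, Set.mem_diff, Set.mem_union]
  constructor
  · rintro ⟨u, hu, rfl⟩
    refine ⟨expand_ne_nil α hu, ?_⟩
    push_neg
    refine ⟨⟨⟨?_, ?_⟩, ?_⟩, ?_⟩
    · intro t ht
      have : (expand α u).head? = some none := by rw [ht]; rfl
      obtain ⟨b, hb⟩ := head?_expand α u none this
      exact nomatch hb
    · intro s hs
      have : (expand α u).getLast? = some (some α) := by
        rw [hs, List.getLast?_append_of_ne_nil _ (by simp)]
        rfl
      exact getLast?_expand α u this
    · intro s t x hw
      have := factor_rel (chain'_expand α u) hw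
      simp at this
    · intro s t x hx hw
      have := factor_rel (chain'_expand α u) hw
      exact hx (this.mpr rfl)
  · rintro ⟨h0, h⟩
    push_neg at h
    obtain ⟨⟨⟨h1, h2⟩, h3⟩, h4⟩ := h
    exact expand_back α w h0 h1 h2 h3 (fun s t x hx => h4 s t x hx)
end

section
/- In a compact topological semigroup S (multiplication jointly continuous, S compact Hausdorff), if two idempotents e and f are J-equivalent, then they are conjugate: there exist x, y ∈ S with e = xy and f = yx. -/
/-- The `J`-preorder on a semigroup: `s ≤_J t` iff `s ∈ S¹tS¹`. -/
def JLe {S : Type*} [Semigroup S] (s t : S) : Prop :=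
  s = t ∨ (∃ x, s = x * t) ∨ (∃ y, s = t * y) ∨ (∃ x y, s = x * t * y)

/-- A copy of `S × S × S × S` carrying a "twisted" semigroup structure. -/
def StarT (S : Type*) : Type _ := S × S × S × S

namespace StarT

variable {S : Type*}

def mk' (z : S × S × S × S) : StarT S := z

def un (z : StarT S) : S × S × S × S := z

@[simp] lemma un_mk' (z : S × S × S × S) : un (mk' z) = z := rfl

instance [Semigroup S] : Mul (StarT S) :=
  ⟨fun x y => mk' (x.un.1 * y.un.1, y.un.2.1 * x.un.2.1,
      x.un.2.2.1 * y.un.1, y.un.2.1 * x.un.2.2.2)⟩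

@[simp] lemma un_mul [Semigroup S] (x y : StarT S) :
    un (x * y) = (x.un.1 * y.un.1, y.un.2.1 * x.un.2.1,
      x.un.2.2.1 * y.un.1, y.un.2.1 * x.un.2.2.2) := rfl

lemma un_injective : Function.Injective (un : StarT S → S × S × S × S) :=
  fun _ _ h => h

instance [Semigroup S] : Semigroup (StarT S) where
  mul_assoc x y z := by
    apply un_injective
    simp [Prod.ext_iff, mul_assoc]

instance [TopologicalSpace S] : TopologicalSpace (StarT S) :=
  inferInstanceAs (TopologicalSpace (S × S × S × S))

instance [TopologicalSpace S] [CompactSpace S] : CompactSpace (StarT S) :=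
  inferInstanceAs (CompactSpace (S × S × S × S))

instance [TopologicalSpace S] [T2Space S] : T2Space (StarT S) :=
  inferInstanceAs (T2Space (S × S × S × S))

lemma continuous_un [TopologicalSpace S] : Continuous (un : StarT S → S × S × S × S) :=
  continuous_id

lemma continuous_mk' [TopologicalSpace S] : Continuous (mk' : S × S × S × S → StarT S) :=
  continuous_id

set_option linter.unusedSectionVars false
section cont

variable [Semigroup S] [TopologicalSpace S] [ContinuousMul S]

lemma cP : Continuous fun z : StarT S => z.un.1 :=
  continuous_fst.comp continuous_un

lemma cQ : Continuous fun z : StarT S => z.un.2.1 :=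
  (continuous_fst.comp continuous_snd).comp continuous_un

lemma cU : Continuous fun z : StarT S => z.un.2.2.1 :=
  ((continuous_fst.comp continuous_snd).comp continuous_snd).comp continuous_un

lemma cV : Continuous fun z : StarT S => z.un.2.2.2 :=
  ((continuous_snd.comp continuous_snd).comp continuous_snd).comp continuous_un

lemma continuous_mul_right (r : StarT S) : Continuous fun x : StarT S => x * r := by
  exact continuous_mk'.comp
    (((cP.mul continuous_const)).prodMk
      (((continuous_const.mul cQ)).prodMk
        (((cU.mul continuous_const)).prodMk (continuous_const.mul cV))))

lemma continuous_star_mul : Continuous fun p : StarT S × StarT S => p.1 * p.2 := by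
  have c1 : Continuous fun p : StarT S × StarT S => p.1 := continuous_fst
  have c2 : Continuous fun p : StarT S × StarT S => p.2 := continuous_snd
  exact continuous_mk'.comp
    ((((cP.comp c1).mul (cP.comp c2))).prodMk
      ((((cQ.comp c2).mul (cQ.comp c1))).prodMk
        ((((cU.comp c1).mul (cP.comp c2))).prodMk ((cQ.comp c2).mul (cV.comp c1)))))

end cont

end StarT

/-- Iterated powers `z0^(n+1)` in the twisted semigroup. -/
def seqT {S : Type*} [Semigroup S] (z0 : StarT S) : ℕ → StarT S
  | 0 => z0
  | n + 1 => seqT z0 n * z0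

lemma seqT_mul {S : Type*} [Semigroup S] (z0 : StarT S) (n m : ℕ) :
    seqT z0 n * seqT z0 m = seqT z0 (n + m + 1) := by
  induction m with
  | zero => rfl
  | succ m ih =>
      show seqT z0 n * (seqT z0 m * z0) = seqT z0 (n + m + 1) * z0
      rw [← mul_assoc, ih]

/-- In a compact semigroup, two `J`-equivalent idempotents are conjugate. -/
theorem stmt_8 {S : Type*} [Semigroup S] [TopologicalSpace S] [CompactSpace S]
    [T2Space S] [ContinuousMul S] (e f : S)
    (he : e * e = e) (hf : f * f = f)
    (hef : JLe e f) (hfe : JLe f e) :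
    ∃ x y : S, e = x * y ∧ f = y * x := by
  -- Extract two-sided factorizations
  obtain ⟨a₀, b₀, hab⟩ : ∃ a₀ b₀ : S, e = a₀ * f * b₀ := by
    rcases hef with h | ⟨x, h⟩ | ⟨y, h⟩ | ⟨x, y, h⟩
    · exact ⟨f, f, by rw [hf, h, hf]⟩
    · exact ⟨x, f, by rw [mul_assoc, hf, h]⟩
    · exact ⟨f, y, by rw [hf, h]⟩
    · exact ⟨x, y, h⟩
  obtain ⟨c₀, d₀, hcd⟩ : ∃ c₀ d₀ : S, f = c₀ * e * d₀ := by
    rcases hfe with h | ⟨x, h⟩ | ⟨y, h⟩ | ⟨x, y, h⟩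
    · exact ⟨e, e, by rw [he, h, he]⟩
    · exact ⟨x, e, by rw [mul_assoc, he, h]⟩
    · exact ⟨e, y, by rw [he, h]⟩
    · exact ⟨x, y, h⟩
  set a : S := a₀ * f with ha
  set b : S := b₀ with hb
  set c : S := c₀ * e with hc
  set d : S := d₀ with hd
  have haf : a * f = a := by rw [ha, mul_assoc, hf]
  have hafb : a * f * b = e := by rw [haf, ha, hb, ← hab]
  have hce : c * e = c := by rw [hc, mul_assoc, he]
  have hced : c * e * d = f := by rw [hce, hc, hd, ← hcd]
  have hcd' : c * d = f := by rw [← hce, hced]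
  -- the twisted sequence
  set z0 : StarT S := StarT.mk' (a * c, d * b, c, d) with hz0
  set t : ℕ → StarT S := seqT z0 with ht
  -- invariants
  have inv : ∀ n : ℕ,
      (t n).un.1 * e = (t n).un.1 ∧
      (t n).un.2.2.1 * e = (t n).un.2.2.1 ∧
      a * (t n).un.2.2.1 = (t n).un.1 ∧
      (t n).un.1 * e * (t n).un.2.1 = e ∧
      (t n).un.1 * (t n).un.2.1 = e ∧
      (t n).un.2.2.1 * e * (t n).un.2.2.2 = f := by
    have hpe : (a * c) * e = a * c := by rw [mul_assoc, hce]
    have hpeq : (a * c) * e * (d * b) = e := by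
      rw [hpe]
      calc a * c * (d * b) = a * (c * d) * b := by simp [mul_assoc]
        _ = e := by rw [hcd', hafb]
    intro n
    induction n with
    | zero =>
        refine ⟨hpe, hce, rfl, hpeq, ?_, hced⟩
        calc a * c * (d * b) = a * (c * d) * b := by simp [mul_assoc]
          _ = e := by rw [hcd', hafb]
    | succ n ih =>
        obtain ⟨iPe, iUe, iaU, iPeQ, iPQ, iUeV⟩ := ih
        have hun : (t (n+1)).un = ((t n).un.1 * (a * c), (d * b) * (t n).un.2.1,
            (t n).un.2.2.1 * (a * c), (d * b) * (t n).un.2.2.2) := rfl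
        rw [hun]
        dsimp only
        refine ⟨?_, ?_, ?_, ?_, ?_, ?_⟩
        · rw [mul_assoc, hpe, ← mul_assoc]
        · rw [mul_assoc, hpe, ← mul_assoc]
        · rw [← mul_assoc, iaU]
        · calc (t n).un.1 * (a * c) * e * ((d * b) * (t n).un.2.1)
              = (t n).un.1 * ((a * c) * e * (d * b)) * (t n).un.2.1 := by
                simp [mul_assoc]
            _ = e := by rw [hpeq, iPeQ]
        · calc (t n).un.1 * (a * c) * ((d * b) * (t n).un.2.1)
              = (t n).un.1 * ((a * c) * e * (d * b)) * (t n).un.2.1 := by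
                rw [hpe]; simp [mul_assoc]
            _ = e := by rw [hpeq, iPeQ]
        · calc (t n).un.2.2.1 * (a * c) * e * ((d * b) * (t n).un.2.2.2)
              = (t n).un.2.2.1 * ((a * c) * e * (d * b)) * (t n).un.2.2.2 := by
                simp [mul_assoc]
            _ = f := by rw [hpeq, iUeV]
  -- the compact subsemigroup
  set K : Set (StarT S) := closure (Set.range t) with hK
  have hKne : K.Nonempty := ⟨t 0, subset_closure ⟨0, rfl⟩⟩
  have hKcompact : IsCompact K := isClosed_closure.isCompact
  have hKmul : ∀ x ∈ K, ∀ y ∈ K, x * y ∈ K := by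
    intro x hx y hy
    refine map_mem_closure₂ (f := fun x y : StarT S => x * y)
      StarT.continuous_star_mul hx hy ?_
    rintro _ ⟨n, rfl⟩ _ ⟨m, rfl⟩
    exact ⟨n + m + 1, (seqT_mul z0 n m).symm⟩
  obtain ⟨k, hkK, hkk⟩ :=
    exists_idempotent_in_compact_subsemigroup StarT.continuous_mul_right K hKne hKcompact hKmul
  -- transfer closed conditions to k
  have transfer : ∀ (C : Set (StarT S)), IsClosed C → (∀ n, t n ∈ C) → k ∈ C := by
    intro C hC hall
    exact closure_minimal (by rintro _ ⟨n, rfl⟩; exact hall n) hC hkK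
  set g : S := k.un.1 with hg
  set u : S := k.un.2.2.1 with hu
  set v : S := k.un.2.2.2 with hv
  have hgg : g * g = g := congrArg (fun z => z.un.1) hkk
  have hge : g * e = g :=
    transfer {z | z.un.1 * e = z.un.1}
      (isClosed_eq (StarT.cP.mul continuous_const) StarT.cP) (fun n => (inv n).1)
  have hgh : g * k.un.2.1 = e :=
    transfer {z | z.un.1 * z.un.2.1 = e}
      (isClosed_eq (StarT.cP.mul StarT.cQ) continuous_const) (fun n => (inv n).2.2.2.2.1)
  have hue : u * e = u :=
    transfer {z | z.un.2.2.1 * e = z.un.2.2.1}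
      (isClosed_eq (StarT.cU.mul continuous_const) StarT.cU) (fun n => (inv n).2.1)
  have hau : a * u = g :=
    transfer {z | a * z.un.2.2.1 = z.un.1}
      (isClosed_eq (continuous_const.mul StarT.cU) StarT.cP) (fun n => (inv n).2.2.1)
  have huev : u * e * v = f :=
    transfer {z | z.un.2.2.1 * e * z.un.2.2.2 = f}
      (isClosed_eq ((StarT.cU.mul continuous_const).mul StarT.cV) continuous_const)
      (fun n => (inv n).2.2.2.2.2)
  -- g = e
  have hgeq : g = e := by
    calc g = g * e := hge.symm
      _ = g * (g * k.un.2.1) := by rw [hgh]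
      _ = g * g * k.un.2.1 := (mul_assoc _ _ _).symm
      _ = g * k.un.2.1 := by rw [hgg]
      _ = e := hgh
  have hxy : a * u = e := by rw [hau, hgeq]
  -- u * a = f
  have key : (u * a) * f * (b * v) = f := by
    calc (u * a) * f * (b * v) = u * (a * f * b) * v := by simp [mul_assoc]
      _ = u * e * v := by rw [hafb]
      _ = f := huev
  have hrr : (u * a) * (u * a) = u * a := by
    calc (u * a) * (u * a) = u * (a * u) * a := by simp [mul_assoc]
      _ = u * e * a := by rw [hxy]
      _ = u * a := by rw [hue]
  have hrf : (u * a) * f = u * a := by rw [mul_assoc, haf]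
  have hyx : u * a = f := by
    have h1 : (u * a) * f = f := by
      conv_lhs => rw [← key]
      calc (u * a) * ((u * a) * f * (b * v))
          = ((u * a) * (u * a)) * f * (b * v) := by simp [mul_assoc]
        _ = (u * a) * f * (b * v) := by rw [hrr]
        _ = f := key
    rw [← h1, hrf]
  exact ⟨a, u, hxy.symm, hyx.symm⟩
end

section
/- Let S be a semigroup and e, f idempotents of S. Then e ≤_J f (i.e., e lies in the ideal S¹fS¹) if and only if e is a retract of f in the Karoubi envelope K(S), i.e., there exist arrows φ : e → f and ψ : f → e in K(S) with ψ ∘ φ = 1_e. -/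
/-- For idempotents `e, f` of a semigroup `S`, one has `e ≤_J f` iff `e` is a
retract of `f` in the Karoubi envelope `K(S)`: there are arrows
`φ = (f, u, e) : e → f` (with `u = f*u*e`) and `ψ = (e, w, f) : f → e`
(with `w = e*w*f`) such that `ψ ∘ φ = (e, w*u, e) = 1_e`, i.e. `w*u = e`. -/
theorem stmt_10 {S : Type*} [Semigroup S] (e f : S)
    (he : e * e = e) (hf : f * f = f) :
    JLe e f ↔ ∃ u w : S, u = f * u * e ∧ w = e * w * f ∧ w * u = e := by
  constructor
  · rintro (h | ⟨x, h⟩ | ⟨y, h⟩ | ⟨x, y, h⟩)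
    · subst h
      exact ⟨e * e, e * e, by simp only [he], by simp only [he], by simp only [he]⟩
    · refine ⟨f * e, e * x * f, ?_, ?_, ?_⟩
      · simp only [← mul_assoc]
        rw [hf, mul_assoc, he]
      · simp only [← mul_assoc]
        rw [he, mul_assoc (e * x) f f, hf]
      · simp only [← mul_assoc]
        rw [mul_assoc (e * x) f f, hf, mul_assoc e x f, ← h, he, he]
    · refine ⟨f * y * e, e * f, ?_, ?_, ?_⟩
      · simp only [← mul_assoc]
        rw [hf, mul_assoc (f * y) e e, he]
      · simp only [← mul_assoc]
        rw [he, mul_assoc, hf]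
      · simp only [← mul_assoc]
        rw [mul_assoc e f f, hf, mul_assoc e f y, ← h, he, he]
    · refine ⟨f * y * e, e * x * f, ?_, ?_, ?_⟩
      · simp only [← mul_assoc]
        rw [hf, mul_assoc (f * y) e e, he]
      · simp only [← mul_assoc]
        rw [he, mul_assoc (e * x) f f, hf]
      · simp only [← mul_assoc]
        rw [mul_assoc (e * x) f f, hf, mul_assoc (e * x) f y, mul_assoc e x (f * y),
          ← mul_assoc x f y, ← h, he, he]
  · rintro ⟨u, w, hu, hw, hwu⟩
    right; right; right
    refine ⟨w, u, ?_⟩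
    have hwf : w * f = w := by rw [hw, mul_assoc (e * w) f f, hf]
    conv_lhs => rw [← hwu]
    conv_lhs => rw [← hwf]
end

section
/- In a compact topological category C, the set of isomorphisms is a closed subset of the space of morphisms, and the map sending an isomorphism to its inverse is continuous on this subspace. -/
open CategoryTheory

/-- The space of all morphisms of a small category, as a sigma type. -/
abbrev Mor (C : Type*) [Category C] := Σ (X Y : C), X ⟶ Y

/-- In a compact topological category (compact Hausdorff spaces of objects and
morphisms, continuous domain, codomain, identity and composition maps), the set
of isomorphisms is closed in the space of morphisms, and inversion is continuous
on this subspace. -/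
theorem stmt_12 {C : Type*} [Category C]
    [TopologicalSpace C] [CompactSpace C] [T2Space C]
    [TopologicalSpace (Mor C)] [CompactSpace (Mor C)] [T2Space (Mor C)]
    (hdom : Continuous fun m : Mor C => m.1)
    (hcod : Continuous fun m : Mor C => m.2.1)
    (hid : Continuous fun X : C => (⟨X, X, 𝟙 X⟩ : Mor C))
    (hcomp : Continuous fun p : {p : Mor C × Mor C // p.1.2.1 = p.2.1} =>
      (⟨p.1.1.1, p.1.2.2.1, p.1.1.2.2 ≫ eqToHom p.2 ≫ p.1.2.2.2⟩ : Mor C)) :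
    IsClosed {m : Mor C | IsIso m.2.2} ∧
      Continuous fun m : {m : Mor C // IsIso m.2.2} =>
        (⟨m.1.2.1, m.1.1, @CategoryTheory.inv C _ _ _ m.1.2.2 m.2⟩ : Mor C) := by
  classical
  set c : {p : Mor C × Mor C // p.1.2.1 = p.2.1} → Mor C :=
    fun p => ⟨p.1.1.1, p.1.2.2.1, p.1.1.2.2 ≫ eqToHom p.2 ≫ p.1.2.2.2⟩ with hc
  set S' : Set (Mor C × Mor C) := {p | p.1.2.1 = p.2.1 ∧ p.2.2.1 = p.1.1} with hS'def
  have hS' : IsClosed S' :=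
    (isClosed_eq (hcod.comp continuous_fst) (hdom.comp continuous_snd)).inter
      (isClosed_eq (hcod.comp continuous_snd) (hdom.comp continuous_fst))
  set i : S' → {p : Mor C × Mor C // p.1.2.1 = p.2.1} := fun q => ⟨q.1, q.2.1⟩ with hi'
  set j : S' → {p : Mor C × Mor C // p.1.2.1 = p.2.1} :=
    fun q => ⟨(q.1.2, q.1.1), q.2.2⟩ with hj'
  have hi : Continuous i := Continuous.subtype_mk continuous_subtype_val _
  have hj : Continuous j :=
    Continuous.subtype_mk
      ((continuous_snd.comp continuous_subtype_val).prodMk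
        (continuous_fst.comp continuous_subtype_val)) _
  set A : Set S' := {q | c (i q) = ⟨q.1.1.1, q.1.1.1, 𝟙 q.1.1.1⟩ ∧
      c (j q) = ⟨q.1.2.1, q.1.2.1, 𝟙 q.1.2.1⟩} with hA'
  have hA : IsClosed A :=
    (isClosed_eq (hcomp.comp hi)
        (hid.comp (hdom.comp (continuous_fst.comp continuous_subtype_val)))).inter
      (isClosed_eq (hcomp.comp hj)
        (hid.comp (hdom.comp (continuous_snd.comp continuous_subtype_val))))
  haveI : CompactSpace S' := isCompact_iff_compactSpace.mp hS'.isCompact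
  set K : Set (Mor C × Mor C) := Subtype.val '' A with hK'
  have hK : IsCompact K := hA.isCompact.image continuous_subtype_val
  -- key extraction lemma
  have key : ∀ (X Y : C) (f : X ⟶ Y) (n : Mor C), (⟨X, Y, f⟩, n) ∈ K →
      ∃ g : Y ⟶ X, n = ⟨Y, X, g⟩ ∧ f ≫ g = 𝟙 X ∧ g ≫ f = 𝟙 Y := by
    rintro X Y f ⟨Y', Z, g⟩ ⟨⟨⟨m1, m2⟩, hm⟩, ⟨e1, e2⟩, hv⟩
    obtain ⟨h1, h2⟩ := Prod.mk.injEq .. ▸ hv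
    subst h1; subst h2
    obtain ⟨hm1, hm2⟩ := hm
    simp only at hm1 hm2
    subst hm1
    simp only [hc, hi', hj', eqToHom_refl, Category.id_comp, Sigma.mk.inj_iff,
      heq_eq_eq, true_and] at e1 e2
    obtain ⟨rfl, hfg⟩ := e1
    rw [heq_eq_eq] at hfg
    simp only [eqToHom_refl, Category.id_comp] at e2
    exact ⟨g, rfl, hfg, e2⟩
  have mem : ∀ (m : Mor C) (hm : IsIso m.2.2),
      (m, (⟨m.2.1, m.1, @CategoryTheory.inv C _ _ _ m.2.2 hm⟩ : Mor C)) ∈ K := by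
    rintro ⟨X, Y, f⟩ hf
    refine ⟨⟨(⟨X, Y, f⟩, ⟨Y, X, inv f⟩), ⟨rfl, rfl⟩⟩, ⟨?_, ?_⟩, rfl⟩ <;>
      simp [hc, hi', hj']
  have hset : {m : Mor C | IsIso m.2.2} = Prod.fst '' K := by
    ext m
    constructor
    · intro hm
      exact ⟨(m, _), mem m hm, rfl⟩
    · rintro ⟨⟨⟨X, Y, f⟩, n⟩, hp, rfl⟩
      obtain ⟨g, rfl, h1, h2⟩ := key X Y f n hp
      exact ⟨⟨g, h1, h2⟩⟩
  have part1 : IsClosed {m : Mor C | IsIso m.2.2} := by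
    rw [hset]; exact (hK.image continuous_fst).isClosed
  refine ⟨part1, ?_⟩
  -- the equivalence
  set e : ↥K ≃ {m : Mor C // IsIso m.2.2} :=
    { toFun := fun q => ⟨q.1.1, by
        have := hset ▸ (Set.mem_image_of_mem Prod.fst q.2)
        exact this⟩
      invFun := fun m => ⟨(m.1, ⟨m.1.2.1, m.1.1,
          @CategoryTheory.inv C _ _ _ m.1.2.2 m.2⟩), mem m.1 m.2⟩
      left_inv := by
        rintro ⟨⟨⟨X, Y, f⟩, n⟩, hq⟩
        obtain ⟨g, rfl, h1, h2⟩ := key X Y f n hq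
        apply Subtype.ext
        have : IsIso f := ⟨⟨g, h1, h2⟩⟩
        simp [IsIso.inv_eq_of_hom_inv_id h1]
      right_inv := fun m => Subtype.ext rfl } with he'
  have he : Continuous e :=
    Continuous.subtype_mk (continuous_fst.comp continuous_subtype_val) _
  haveI : CompactSpace ↥K := isCompact_iff_compactSpace.mp hK
  have hsymm : Continuous (e.symm : {m : Mor C // IsIso m.2.2} → ↥K) :=
    he.homeoOfEquivCompactToT2.symm.continuous
  have heq2 : (fun m : {m : Mor C // IsIso m.2.2} =>
      (⟨m.1.2.1, m.1.1, @CategoryTheory.inv C _ _ _ m.1.2.2 m.2⟩ : Mor C)) =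
      (fun q : ↥K => q.1.2) ∘ e.symm := rfl
  rw [heq2]
  exact (continuous_snd.comp continuous_subtype_val).comp hsymm
end

section
/- In a compact semigroup S, if an element s has local units (s = e·s·f for idempotents e, f) and t is J-equivalent to s, then t also has local units. Hence the set of elements with local units is a union of J-classes. -/
/-- `J`-equivalence on a semigroup. -/
def JEq {S : Type*} [Semigroup S] (s t : S) : Prop :=
  JLe s t ∧ JLe t s

/-- An element `s` has local units if `s = e*s*f` for some idempotents `e, f`. -/
def HasLocalUnits {S : Type*} [Semigroup S] (s : S) : Prop :=
  ∃ e f : S, e * e = e ∧ f * f = f ∧ s = e * s * f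

/-- Key lemma: in a compact semigroup, if `t = a * t * b` then `t` has local
units. -/
theorem hasLocalUnits_of_sandwich {S : Type*} [Semigroup S] [TopologicalSpace S]
    [CompactSpace S] [T2Space S] [ContinuousMul S] (t a b : S)
    (h : t = a * t * b) : HasLocalUnits t := by
  -- Work in `S × Sᵐᵒᵖ` so that the sandwich set is a subsemigroup.
  haveI : CompactSpace Sᵐᵒᵖ := MulOpposite.opHomeomorph.compactSpace
  let T : Set (S × Sᵐᵒᵖ) := {p | p.1 * t * p.2.unop = t}
  have hTne : T.Nonempty := ⟨(a, MulOpposite.op b), h.symm⟩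
  have hTclosed : IsClosed T := by
    have : Continuous fun p : S × Sᵐᵒᵖ => p.1 * t * p.2.unop := by
      fun_prop
    exact isClosed_eq this continuous_const
  have hTcompact : IsCompact T := hTclosed.isCompact
  have hTmul : ∀ x ∈ T, ∀ y ∈ T, x * y ∈ T := by
    rintro ⟨x1, x2⟩ hx ⟨y1, y2⟩ hy
    simp only [T, Set.mem_setOf_eq, Prod.mk_mul_mk, MulOpposite.unop_mul] at hx hy ⊢
    calc x1 * y1 * t * (y2.unop * x2.unop)
        = x1 * (y1 * t * y2.unop) * x2.unop := by simp [mul_assoc]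
      _ = t := by rw [hy, hx]
  obtain ⟨⟨e, f'⟩, hmem, hid⟩ :=
    exists_idempotent_in_compact_subsemigroup
      (fun r => continuous_id.mul continuous_const) T hTne hTcompact hTmul
  have he : e * e = e := congrArg Prod.fst hid
  have hf' : f' * f' = f' := congrArg Prod.snd hid
  refine ⟨e, f'.unop, he, ?_, ?_⟩
  · have := congrArg MulOpposite.unop hf'
    simpa [MulOpposite.unop_mul] using this
  · exact hmem.symm

/-- In a compact semigroup, if `s` has local units and `t` is `J`-equivalent to
`s`, then `t` has local units; hence the set of elements with local units is a
union of `J`-classes. -/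
theorem stmt_14 {S : Type*} [Semigroup S] [TopologicalSpace S] [CompactSpace S]
    [T2Space S] [ContinuousMul S] :
    (∀ s t : S, HasLocalUnits s → JEq s t → HasLocalUnits t) ∧
    (∀ s t : S, JEq s t → (HasLocalUnits s ↔ HasLocalUnits t)) := by
  have main : ∀ s t : S, HasLocalUnits s → JEq s t → HasLocalUnits t := by
    rintro s t ⟨e, f, he, hf, hs⟩ ⟨hst, hts⟩
    -- First: `t = p * s * q` for some `p, q`.
    have step1 : ∃ p q : S, t = p * s * q := by
      rcases hts with rfl | ⟨x, hx⟩ | ⟨y, hy⟩ | ⟨x, y, hxy⟩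
      · exact ⟨e, f, hs⟩
      · refine ⟨x * e, f, ?_⟩
        conv_lhs => rw [hx, hs]
        simp [mul_assoc]
      · refine ⟨e, f * y, ?_⟩
        conv_lhs => rw [hy, hs]
        simp [mul_assoc]
      · exact ⟨x, y, hxy⟩
    obtain ⟨p, q, hpq⟩ := step1
    -- Second: `t = a * t * b` for some `a, b`.
    have step2 : ∃ a b : S, t = a * t * b := by
      rcases hst with rfl | ⟨u, hu⟩ | ⟨v, hv⟩ | ⟨u, v, huv⟩
      · exact ⟨p, q, hpq⟩
      · refine ⟨p * u, q, ?_⟩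
        conv_lhs => rw [hpq, hu]
        simp [mul_assoc]
      · refine ⟨p, v * q, ?_⟩
        conv_lhs => rw [hpq, hv]
        simp [mul_assoc]
      · refine ⟨p * u, v * q, ?_⟩
        conv_lhs => rw [hpq, huv]
        simp [mul_assoc]
    obtain ⟨a, b, hab⟩ := step2
    exact hasLocalUnits_of_sandwich t a b hab
  refine ⟨main, fun s t hJ => ⟨fun h => main s t h hJ, fun h => main t s h ⟨hJ.2, hJ.1⟩⟩⟩
end
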